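/- arXiv:2303.18239 — 2 statements merged into one kernel-verified Lean document; each statement's English description precedes it below -/
import Mathlib

section
/- For every ε > 0 and every r ∈ ℝ, the second derivative of η_ε satisfies η_ε″(r) ≥ 0. -/
open Set

/-- Explicit first derivative of `η_ε`. -/
noncomputable def etaD (ε : ℝ) : ℝ → ℝ := fun r =>
  if r < -ε then 2 * r else if r < 0 then -(2 * r ^ 3 / ε ^ 2 + 4 * r ^ 2 / ε) else 0

/-- Explicit second derivative of `η_ε`. -/
noncomputable def etaD2 (ε : ℝ) : ℝ → ℝ := fun r =>
  if r < -ε then 2 else if r < 0 then -(6 * r ^ 2 / ε ^ 2 + 8 * r / ε) else 0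

lemma glue2 {f fl fr : ℝ → ℝ} {s t : Set ℝ} {a d : ℝ}
    (hmem : s ∪ t ∈ nhds a) (has : a ∈ s) (hat : a ∈ t)
    (hfl : HasDerivAt fl d a) (hfr : HasDerivAt fr d a)
    (hl : ∀ x ∈ s, f x = fl x) (hr : ∀ x ∈ t, f x = fr x) : HasDerivAt f d a := by
  have h1 : HasDerivWithinAt f d s a := (hfl.hasDerivWithinAt).congr hl (hl a has)
  have h2 : HasDerivWithinAt f d t a := (hfr.hasDerivWithinAt).congr hr (hr a hat)
  exact (h1.union h2).hasDerivAt hmem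

lemma hasDerivAt_P1 (ε x : ℝ) : HasDerivAt (fun r : ℝ => r ^ 2 - ε ^ 2 / 6) (2 * x) x := by
  simpa using (hasDerivAt_pow 2 x).sub_const (ε ^ 2 / 6)

lemma hasDerivAt_P2 {ε : ℝ} (hε : ε ≠ 0) (x : ℝ) :
    HasDerivAt (fun r : ℝ => -(r ^ 3 / ε) * (r / (2 * ε) + 4 / 3))
      (-(2 * x ^ 3 / ε ^ 2 + 4 * x ^ 2 / ε)) x := by
  have h1 : HasDerivAt (fun r : ℝ => -(r ^ 3 / ε)) (-(3 * x ^ 2 / ε)) x := by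
    exact ((hasDerivAt_pow 3 x).div_const ε).neg.congr_deriv (by norm_num)
  have h2 : HasDerivAt (fun r : ℝ => r / (2 * ε) + 4 / 3) (1 / (2 * ε)) x := by
    simpa using ((hasDerivAt_id x).div_const (2 * ε)).add_const (4 / 3 : ℝ)
  have h := h1.mul h2
  refine h.congr_deriv ?_
  field_simp
  ring

lemma hasDerivAt_P2' {ε : ℝ} (hε : ε ≠ 0) (x : ℝ) :
    HasDerivAt (fun r : ℝ => -(2 * r ^ 3 / ε ^ 2 + 4 * r ^ 2 / ε))
      (-(6 * x ^ 2 / ε ^ 2 + 8 * x / ε)) x := by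
  have h1 : HasDerivAt (fun r : ℝ => 2 * r ^ 3 / ε ^ 2) (2 * (3 * x ^ 2) / ε ^ 2) x := by
    simpa using (((hasDerivAt_pow 3 x).const_mul 2).div_const (ε ^ 2))
  have h2 : HasDerivAt (fun r : ℝ => 4 * r ^ 2 / ε) (4 * (2 * x) / ε) x := by
    simpa using (((hasDerivAt_pow 2 x).const_mul 4).div_const ε)
  have h := (h1.add h2).neg
  refine h.congr_deriv ?_
  ring

lemma eta_hasDerivAt {ε : ℝ} (hε : 0 < ε) (x : ℝ) :
    HasDerivAt (fun r : ℝ =>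
      if r < -ε then r ^ 2 - ε ^ 2 / 6
      else if r < 0 then -(r ^ 3 / ε) * (r / (2 * ε) + 4 / 3)
      else 0) (etaD ε x) x := by
  have hεne : ε ≠ 0 := ne_of_gt hε
  rcases lt_trichotomy x (-ε) with h | h | h
  · have hd := hasDerivAt_P1 ε x
    have : HasDerivAt (fun r : ℝ =>
        if r < -ε then r ^ 2 - ε ^ 2 / 6
        else if r < 0 then -(r ^ 3 / ε) * (r / (2 * ε) + 4 / 3)
        else 0) (2 * x) x := by
      apply glue2 (s := Iio (-ε)) (t := Iio (-ε)) _ h h hd hd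
      · intro y hy; simp [Set.mem_Iio.mp hy]
      · intro y hy; simp [Set.mem_Iio.mp hy]
      · rw [Set.union_self]; exact Iio_mem_nhds h
    simpa [etaD, h] using this
  · -- boundary x = -ε
    subst h
    have hd1 := hasDerivAt_P1 ε (-ε)
    have hd2 := hasDerivAt_P2 hεne (-ε)
    have hval : (-(( -ε) ^ 3 / ε) * ((-ε) / (2 * ε) + 4 / 3)) = (-ε) ^ 2 - ε ^ 2 / 6 := by
      field_simp; ring
    have hd2' : HasDerivAt (fun r : ℝ => -(r ^ 3 / ε) * (r / (2 * ε) + 4 / 3))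
        (2 * (-ε)) (-ε) := by
      convert hd2 using 1; field_simp; ring
    have key : HasDerivAt (fun r : ℝ =>
        if r < -ε then r ^ 2 - ε ^ 2 / 6
        else if r < 0 then -(r ^ 3 / ε) * (r / (2 * ε) + 4 / 3)
        else 0) (2 * (-ε)) (-ε) := by
      apply glue2 (s := Iic (-ε)) (t := Icc (-ε) 0) _ (Set.mem_Iic.mpr le_rfl) (Set.mem_Icc.mpr ⟨le_rfl, by linarith⟩) hd1 hd2'
      · intro y hy
        rcases lt_or_eq_of_le (Set.mem_Iic.mp hy) with h' | h'
        · simp [h']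
        · subst h'; simp [lt_irrefl, hε, hval, show (-ε : ℝ) < 0 by linarith]
      · intro y hy
        rcases lt_or_eq_of_le hy.2 with h' | h'
        · simp [not_lt.mpr hy.1, h']
        · subst h'; simp [not_lt.mpr hy.1, lt_irrefl]
      · have hsub : Iio (0 : ℝ) ⊆ Iic (-ε) ∪ Icc (-ε) 0 := by
          intro y hy
          rcases le_or_gt y (-ε) with h' | h'
          · exact Or.inl h'
          · exact Or.inr ⟨le_of_lt h', le_of_lt hy⟩
        exact Filter.mem_of_superset (Iio_mem_nhds (by linarith)) hsub
    have heq : etaD ε (-ε) = 2 * (-ε) := by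
      simp only [etaD, lt_irrefl, if_neg (lt_irrefl (-ε)), if_pos (show (-ε : ℝ) < 0 by linarith)]
      field_simp; simp; ring
    rw [heq]; exact key
  · rcases lt_trichotomy x 0 with h0 | h0 | h0
    · have hd := hasDerivAt_P2 hεne x
      have : HasDerivAt (fun r : ℝ =>
          if r < -ε then r ^ 2 - ε ^ 2 / 6
          else if r < 0 then -(r ^ 3 / ε) * (r / (2 * ε) + 4 / 3)
          else 0) (-(2 * x ^ 3 / ε ^ 2 + 4 * x ^ 2 / ε)) x := by
        apply glue2 (s := Ioo (-ε) 0) (t := Ioo (-ε) 0) _ ⟨h, h0⟩ ⟨h, h0⟩ hd hd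
        · intro y hy; simp [not_lt.mpr (le_of_lt hy.1), hy.2]
        · intro y hy; simp [not_lt.mpr (le_of_lt hy.1), hy.2]
        · rw [Set.union_self]; exact Ioo_mem_nhds h h0
      simpa [etaD, not_lt.mpr (le_of_lt h), h0] using this
    · -- boundary x = 0
      subst h0
      have hd2 := hasDerivAt_P2 hεne 0
      have hd2' : HasDerivAt (fun r : ℝ => -(r ^ 3 / ε) * (r / (2 * ε) + 4 / 3)) 0 0 := by
        convert hd2 using 1; field_simp; simp
      have hd3 : HasDerivAt (fun _ : ℝ => (0 : ℝ)) 0 0 := hasDerivAt_const 0 0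
      have key : HasDerivAt (fun r : ℝ =>
          if r < -ε then r ^ 2 - ε ^ 2 / 6
          else if r < 0 then -(r ^ 3 / ε) * (r / (2 * ε) + 4 / 3)
          else 0) 0 0 := by
        apply glue2 (s := Icc (-ε) 0) (t := Ici 0) _ (Set.mem_Icc.mpr ⟨by linarith, le_rfl⟩) (Set.mem_Ici.mpr le_rfl) hd2' hd3
        · intro y hy
          rcases lt_or_eq_of_le hy.2 with h' | h'
          · simp [not_lt.mpr hy.1, h']
          · subst h'; simp [not_lt.mpr hy.1, lt_irrefl]
        · intro y hy
          have h1 : ¬ y < -ε := by simp only [not_lt]; linarith [Set.mem_Ici.mp hy]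
          have h2 : ¬ y < 0 := not_lt.mpr hy
          simp [h1, h2]
        · have hsub : Ioi (-ε) ⊆ Icc (-ε) 0 ∪ Ici 0 := by
            intro y hy
            rcases le_or_gt y 0 with h' | h'
            · exact Or.inl ⟨le_of_lt hy, h'⟩
            · exact Or.inr (le_of_lt h')
          exact Filter.mem_of_superset (Ioi_mem_nhds (by linarith)) hsub
      simpa [etaD, lt_irrefl, show ¬ (0:ℝ) < -ε by linarith] using key
    · have hd3 : HasDerivAt (fun _ : ℝ => (0 : ℝ)) 0 x := hasDerivAt_const x 0
      have : HasDerivAt (fun r : ℝ =>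
          if r < -ε then r ^ 2 - ε ^ 2 / 6
          else if r < 0 then -(r ^ 3 / ε) * (r / (2 * ε) + 4 / 3)
          else 0) 0 x := by
        apply glue2 (s := Ioi 0) (t := Ioi 0) _ h0 h0 hd3 hd3
        · intro y hy
          have h1 : ¬ y < -ε := by simp only [not_lt]; linarith [mem_Ioi.mp hy]
          have h2 : ¬ y < 0 := not_lt.mpr (le_of_lt hy)
          simp [h1, h2]
        · intro y hy
          have h1 : ¬ y < -ε := by simp only [not_lt]; linarith [mem_Ioi.mp hy]
          have h2 : ¬ y < 0 := not_lt.mpr (le_of_lt hy)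
          simp [h1, h2]
        · rw [Set.union_self]; exact Ioi_mem_nhds h0
      simpa [etaD, not_lt.mpr (le_of_lt h0), show ¬ x < -ε by linarith] using this

lemma etaD_hasDerivAt {ε : ℝ} (hε : 0 < ε) (x : ℝ) :
    HasDerivAt (etaD ε) (etaD2 ε x) x := by
  have hεne : ε ≠ 0 := ne_of_gt hε
  have hd1 : ∀ y : ℝ, HasDerivAt (fun r : ℝ => 2 * r) 2 y := fun y => by
    simpa using (hasDerivAt_id y).const_mul 2
  rcases lt_trichotomy x (-ε) with h | h | h
  · have : HasDerivAt (etaD ε) 2 x := by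
      apply glue2 (s := Iio (-ε)) (t := Iio (-ε)) _ h h (hd1 x) (hd1 x)
      · intro y hy; simp [etaD, Set.mem_Iio.mp hy]
      · intro y hy; simp [etaD, Set.mem_Iio.mp hy]
      · rw [Set.union_self]; exact Iio_mem_nhds h
    simpa [etaD2, h] using this
  · subst h
    have hd2 := hasDerivAt_P2' hεne (-ε)
    have hd2' : HasDerivAt (fun r : ℝ => -(2 * r ^ 3 / ε ^ 2 + 4 * r ^ 2 / ε)) 2 (-ε) := by
      convert hd2 using 1; field_simp; ring
    have key : HasDerivAt (etaD ε) 2 (-ε) := by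
      apply glue2 (s := Iic (-ε)) (t := Icc (-ε) 0) _ (Set.mem_Iic.mpr le_rfl) (Set.mem_Icc.mpr ⟨le_rfl, by linarith⟩)
        (hd1 (-ε)) hd2'
      · intro y hy
        rcases lt_or_eq_of_le (Set.mem_Iic.mp hy) with h' | h'
        · simp [etaD, h']
        · subst h'
          simp only [etaD, if_neg (lt_irrefl (-ε)),
            if_pos (show (-ε : ℝ) < 0 by linarith)]
          field_simp; ring
      · intro y hy
        rcases lt_or_eq_of_le hy.2 with h' | h'
        · simp [etaD, not_lt.mpr hy.1, h']
        · subst h'; simp [etaD, not_lt.mpr hy.1, lt_irrefl]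
      · have hsub : Iio (0 : ℝ) ⊆ Iic (-ε) ∪ Icc (-ε) 0 := by
          intro y hy
          rcases le_or_gt y (-ε) with h' | h'
          · exact Or.inl h'
          · exact Or.inr ⟨le_of_lt h', le_of_lt hy⟩
        exact Filter.mem_of_superset (Iio_mem_nhds (by linarith)) hsub
    have heq : etaD2 ε (-ε) = 2 := by
      simp only [etaD2, if_neg (lt_irrefl (-ε)), if_pos (show (-ε : ℝ) < 0 by linarith)]
      field_simp; ring
    rw [heq]; exact key
  · rcases lt_trichotomy x 0 with h0 | h0 | h0
    · have hd2 := hasDerivAt_P2' hεne x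
      have : HasDerivAt (etaD ε) (-(6 * x ^ 2 / ε ^ 2 + 8 * x / ε)) x := by
        apply glue2 (s := Ioo (-ε) 0) (t := Ioo (-ε) 0) _ ⟨h, h0⟩ ⟨h, h0⟩ hd2 hd2
        · intro y hy; simp [etaD, not_lt.mpr (le_of_lt hy.1), hy.2]
        · intro y hy; simp [etaD, not_lt.mpr (le_of_lt hy.1), hy.2]
        · rw [Set.union_self]; exact Ioo_mem_nhds h h0
      simpa [etaD2, not_lt.mpr (le_of_lt h), h0] using this
    · subst h0
      have hd2 := hasDerivAt_P2' hεne 0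
      have hd2' : HasDerivAt (fun r : ℝ => -(2 * r ^ 3 / ε ^ 2 + 4 * r ^ 2 / ε)) 0 0 := by
        convert hd2 using 1; field_simp; simp
      have hd3 : HasDerivAt (fun _ : ℝ => (0 : ℝ)) 0 0 := hasDerivAt_const 0 0
      have key : HasDerivAt (etaD ε) 0 0 := by
        apply glue2 (s := Icc (-ε) 0) (t := Ici 0) _ (Set.mem_Icc.mpr ⟨by linarith, le_rfl⟩) (Set.mem_Ici.mpr le_rfl) hd2' hd3
        · intro y hy
          rcases lt_or_eq_of_le hy.2 with h' | h'
          · simp [etaD, not_lt.mpr hy.1, h']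
          · subst h'; simp [etaD, not_lt.mpr hy.1, lt_irrefl]
        · intro y hy
          have h1 : ¬ y < -ε := by simp only [not_lt]; linarith [Set.mem_Ici.mp hy]
          have h2 : ¬ y < 0 := not_lt.mpr hy
          simp [etaD, h1, h2]
        · have hsub : Ioi (-ε) ⊆ Icc (-ε) 0 ∪ Ici 0 := by
            intro y hy
            rcases le_or_gt y 0 with h' | h'
            · exact Or.inl ⟨le_of_lt hy, h'⟩
            · exact Or.inr (le_of_lt h')
          exact Filter.mem_of_superset (Ioi_mem_nhds (by linarith)) hsub
      simpa [etaD2, lt_irrefl, show ¬ (0:ℝ) < -ε by linarith] using key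
    · have hd3 : HasDerivAt (fun _ : ℝ => (0 : ℝ)) 0 x := hasDerivAt_const x 0
      have : HasDerivAt (etaD ε) 0 x := by
        apply glue2 (s := Ioi 0) (t := Ioi 0) _ h0 h0 hd3 hd3
        · intro y hy
          have h1 : ¬ y < -ε := by simp only [not_lt]; linarith [mem_Ioi.mp hy]
          have h2 : ¬ y < 0 := not_lt.mpr (le_of_lt hy)
          simp [etaD, h1, h2]
        · intro y hy
          have h1 : ¬ y < -ε := by simp only [not_lt]; linarith [mem_Ioi.mp hy]
          have h2 : ¬ y < 0 := not_lt.mpr (le_of_lt hy)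
          simp [etaD, h1, h2]
        · rw [Set.union_self]; exact Ioi_mem_nhds h0
      simpa [etaD2, not_lt.mpr (le_of_lt h0), show ¬ x < -ε by linarith] using this

/-- For every `ε > 0` and every `r`, the second derivative of `η_ε` satisfies `η_ε''(r) ≥ 0`. -/
theorem eta_eps_deriv2_nonneg (ε : ℝ) (hε : 0 < ε) (r : ℝ) :
    0 ≤ deriv (deriv (fun r : ℝ =>
      if r < -ε then r ^ 2 - ε ^ 2 / 6
      else if r < 0 then -(r ^ 3 / ε) * (r / (2 * ε) + 4 / 3)
      else 0)) r := by
  have hεne : ε ≠ 0 := ne_of_gt hε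
  have hd : deriv (fun r : ℝ =>
      if r < -ε then r ^ 2 - ε ^ 2 / 6
      else if r < 0 then -(r ^ 3 / ε) * (r / (2 * ε) + 4 / 3)
      else 0) = etaD ε := funext fun x => (eta_hasDerivAt hε x).deriv
  rw [hd, (etaD_hasDerivAt hε r).deriv]
  unfold etaD2
  split_ifs with h1 h2
  · norm_num
  · have hr1 : -ε ≤ r := not_lt.mp h1
    have key : -(6 * r ^ 2 / ε ^ 2 + 8 * r / ε) = -(2 * r / ε ^ 2) * (3 * r + 4 * ε) := by
      field_simp; ring
    rw [key]
    apply mul_nonneg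
    · have : 2 * r / ε ^ 2 ≤ 0 := by
        apply div_nonpos_of_nonpos_of_nonneg
        · linarith
        · positivity
      linarith
    · nlinarith
  · exact le_rfl
end

section
/- The standard incidence function F : [0,∞)² → [0,∞) defined by F(s,i) = β·s·i/(s+i) for (s,i) with s+i ≠ 0 and F(s,i) = 0 otherwise, with β > 0 a constant, is globally Lipschitz: there exists L_F > 0 such that |F(s₁,i₁) − F(s₂,i₂)| ≤ L_F·(|s₁−s₂|² + |i₁−i₂|²)^{1/2} for all s₁,i₁,s₂,i₂ ∈ [0,∞). -/
/-- one-variable Lipschitz bound for `g s i = s*i/(s+i)` (extended by 0). -/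
lemma g_lip (s₁ s₂ i : ℝ) (hs₁ : 0 ≤ s₁) (hs₂ : 0 ≤ s₂) (hi : 0 ≤ i) :
    |(if s₁ + i = 0 then (0:ℝ) else s₁ * i / (s₁ + i)) -
     (if s₂ + i = 0 then (0:ℝ) else s₂ * i / (s₂ + i))| ≤ |s₁ - s₂| := by
  rcases eq_or_lt_of_le hi with h0 | hpos
  · subst h0
    simp
  · have h1 : 0 < s₁ + i := by linarith
    have h2 : 0 < s₂ + i := by linarith
    rw [if_neg h1.ne', if_neg h2.ne']
    have key : s₁ * i / (s₁ + i) - s₂ * i / (s₂ + i)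
        = i ^ 2 * (s₁ - s₂) / ((s₁ + i) * (s₂ + i)) := by
      field_simp; ring
    rw [key, abs_div, abs_mul, abs_of_pos (mul_pos h1 h2),
      abs_of_nonneg (sq_nonneg i), div_le_iff₀ (mul_pos h1 h2)]
    have hle : i ^ 2 ≤ (s₁ + i) * (s₂ + i) := by nlinarith
    nlinarith [abs_nonneg (s₁ - s₂)]

/-- The standard incidence function `F(s,i) = β s i/(s+i)` (extended by `0` when `s+i = 0`)
with `β > 0` is globally Lipschitz on `[0,∞)²`. -/
theorem standard_incidence_lipschitz (β : ℝ) (hβ : 0 < β) :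
    ∃ L > 0, ∀ s₁ i₁ s₂ i₂ : ℝ, 0 ≤ s₁ → 0 ≤ i₁ → 0 ≤ s₂ → 0 ≤ i₂ →
      |(if s₁ + i₁ = 0 then 0 else β * s₁ * i₁ / (s₁ + i₁)) -
        (if s₂ + i₂ = 0 then 0 else β * s₂ * i₂ / (s₂ + i₂))| ≤
      L * Real.sqrt (|s₁ - s₂| ^ 2 + |i₁ - i₂| ^ 2) := by
  refine ⟨2 * β, by positivity, fun s₁ i₁ s₂ i₂ hs₁ hi₁ hs₂ hi₂ => ?_⟩
  set g : ℝ → ℝ → ℝ := fun s i => if s + i = 0 then (0:ℝ) else s * i / (s + i) with hg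
  have hrw : ∀ s i : ℝ, (if s + i = 0 then (0:ℝ) else β * s * i / (s + i)) = β * g s i := by
    intro s i
    simp only [hg]
    split <;> ring
  rw [hrw, hrw]
  have h1 : |g s₁ i₁ - g s₂ i₁| ≤ |s₁ - s₂| := g_lip s₁ s₂ i₁ hs₁ hs₂ hi₁
  have h2 : |g s₂ i₁ - g s₂ i₂| ≤ |i₁ - i₂| := by
    have hsym : ∀ s i : ℝ, g s i = g i s := by
      intro s i
      simp only [hg]
      rw [add_comm i s]
      split <;> ring_nf
    rw [hsym s₂ i₁, hsym s₂ i₂]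
    exact g_lip i₁ i₂ s₂ hi₁ hi₂ hs₂
  have htri : |β * g s₁ i₁ - β * g s₂ i₂| ≤ β * (|s₁ - s₂| + |i₁ - i₂|) := by
    have : |β * g s₁ i₁ - β * g s₂ i₂|
        = |β * (g s₁ i₁ - g s₂ i₁) + β * (g s₂ i₁ - g s₂ i₂)| := by ring_nf
    rw [this]
    calc _ ≤ |β * (g s₁ i₁ - g s₂ i₁)| + |β * (g s₂ i₁ - g s₂ i₂)| := abs_add_le _ _
      _ = β * |g s₁ i₁ - g s₂ i₁| + β * |g s₂ i₁ - g s₂ i₂| := by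
          rw [abs_mul, abs_mul, abs_of_pos hβ]
      _ ≤ β * (|s₁ - s₂| + |i₁ - i₂|) := by nlinarith
  refine htri.trans ?_
  have hsq : |s₁ - s₂| + |i₁ - i₂| ≤ 2 * Real.sqrt (|s₁ - s₂| ^ 2 + |i₁ - i₂| ^ 2) := by
    have ha : |s₁ - s₂| ≤ Real.sqrt (|s₁ - s₂| ^ 2 + |i₁ - i₂| ^ 2) := by
      rw [Real.le_sqrt]
      case hy => positivity
      case hx => positivity
      nlinarith [sq_nonneg (|i₁ - i₂|)]
    have hb : |i₁ - i₂| ≤ Real.sqrt (|s₁ - s₂| ^ 2 + |i₁ - i₂| ^ 2) := by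
      rw [Real.le_sqrt]
      case hy => positivity
      case hx => positivity
      nlinarith [sq_nonneg (|s₁ - s₂|)]
    linarith
  calc β * (|s₁ - s₂| + |i₁ - i₂|)
      ≤ β * (2 * Real.sqrt (|s₁ - s₂| ^ 2 + |i₁ - i₂| ^ 2)) := by
        exact mul_le_mul_of_nonneg_left hsq hβ.le
    _ = 2 * β * Real.sqrt (|s₁ - s₂| ^ 2 + |i₁ - i₂| ^ 2) := by ring
end
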